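/- arXiv:1703.05788 — 2 statements merged into one kernel-verified Lean document; each statement's English description precedes it below -/
import Mathlib

section
/- Let v be a d-dimensional centered Gaussian random vector whose covariance matrix Σ satisfies ‖Σ − j·I‖ ≤ ε in operator norm, where j > 0 and Σ is positive definite. Then the vector N := j^{1/2}·Σ^{-1/2}·v is a centered Gaussian vector with covariance matrix j·I, and the covariance matrix of v − N has operator norm at most ε. In particular, each component of v − N has variance at most ε. -/
open MeasureTheory ProbabilityTheory Matrix
open scoped ENNReal NNReal

/-!
Write `S = Σ^{1/2}`. Both `N = √j S⁻¹ v` and `v - N = (1 - √j S⁻¹) v` are linear images `A v` of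
the Gaussian vector `v`, so they are centered Gaussian with covariance
`A Σ Aᵀ = (A S)(A S)ᵀ`, which is `j • 1` resp. `(S - √j)²`. The norm bound is spectral: in an
eigenbasis of `Σ` the hypothesis says `|λ - j| ≤ ε` for every eigenvalue `λ`, and `(S - √j)²` has
eigenvalues `(√λ - √j)² ≤ |λ - j|`.
-/

/-- The square root of a positive semidefinite matrix, as `Matrix.PosSemidef.sqrt` was defined
in the older Mathlib (removed since). -/
noncomputable def Matrix.PosSemidef.sqrt {n : Type*} {𝕜 : Type*} [Fintype n] [RCLike 𝕜]
    [DecidableEq n] [PartialOrder 𝕜] [StarOrderedRing 𝕜] {A : Matrix n n 𝕜}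
    (hA : A.PosSemidef) : Matrix n n 𝕜 :=
  (hA.1.eigenvectorUnitary : Matrix n n 𝕜) * diagonal ((↑) ∘ (√·) ∘ hA.1.eigenvalues) *
  (star (hA.1.eigenvectorUnitary : Matrix n n 𝕜))

theorem Real.sqrt_sub_sqrt_sq_le_abs_sub {a b : ℝ} (ha : 0 ≤ a) (hb : 0 ≤ b) :
    (√a - √b) ^ 2 ≤ |a - b| := by
  have hprod : (√a - √b) * (√a + √b) = a - b := by
    ring_nf
    rw [Real.sq_sqrt ha, Real.sq_sqrt hb]
  have hsum : |√a - √b| ≤ √a + √b :=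
    abs_sub_le_iff.2 ⟨by linarith [Real.sqrt_nonneg b], by linarith [Real.sqrt_nonneg a]⟩
  rw [← hprod, abs_mul, abs_of_nonneg (by positivity : 0 ≤ √a + √b), ← sq_abs, sq]
  exact mul_le_mul_of_nonneg_left hsum (abs_nonneg _)

namespace Matrix

theorem mul_mul_self_mul_transpose {m n α : Type*} [Fintype n] [CommSemiring α]
    {S : Matrix n n α} (hS : Sᵀ = S) (A : Matrix m n α) :
    A * (S * S) * Aᵀ = A * S * (A * S)ᵀ := by
  rw [transpose_mul, hS, Matrix.mul_assoc, Matrix.mul_assoc, Matrix.mul_assoc]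

section Symmetric

variable {n : Type*} [Fintype n] [DecidableEq n] {S : Matrix n n ℝ}

theorem smul_nonsing_inv_mul_mul_self_mul_transpose (hS : IsUnit S.det) (hSt : Sᵀ = S) (c : ℝ) :
    (c • S⁻¹) * (S * S) * (c • S⁻¹)ᵀ = (c * c) • 1 := by
  rw [mul_mul_self_mul_transpose hSt, smul_mul_assoc, nonsing_inv_mul S hS]
  simp [smul_smul]

theorem one_sub_smul_nonsing_inv_mul_mul_self_mul_transpose (hS : IsUnit S.det) (hSt : Sᵀ = S)
    (c : ℝ) : (1 - c • S⁻¹) * (S * S) * (1 - c • S⁻¹)ᵀ = (S - c • 1) ^ 2 := by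
  rw [mul_mul_self_mul_transpose hSt, sub_mul, one_mul, smul_mul_assoc, nonsing_inv_mul S hS, sq]
  simp [hSt]

end Symmetric

theorem apply_self_le_of_abs_dotProduct_mulVec_le {n : Type*} [Fintype n] [DecidableEq n]
    {B : Matrix n n ℝ} {ε : ℝ} (h : ∀ x, |x ⬝ᵥ (B *ᵥ x)| ≤ ε * (x ⬝ᵥ x)) (a : n) :
    B a a ≤ ε := by
  simpa [mulVec_single_one, single_one_dotProduct] using (le_abs_self _).trans (h (Pi.single a 1))

variable {n : Type*} [Fintype n] [DecidableEq n] {A : Matrix n n ℝ}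

namespace IsHermitian

theorem dotProduct_cfc_mulVec (hA : A.IsHermitian) (f : ℝ → ℝ) (x : n → ℝ) :
    x ⬝ᵥ (cfc f A *ᵥ x) =
      ∑ i, f (hA.eigenvalues i) * (star (hA.eigenvectorUnitary : Matrix n n ℝ) *ᵥ x) i ^ 2 := by
  rw [hA.cfc_eq, IsHermitian.cfc, Unitary.conjStarAlgAut_apply, ← mulVec_mulVec, ← mulVec_mulVec,
    dotProduct_mulVec, ← mulVec_transpose, ← conjTranspose_eq_transpose_of_trivial,
    ← star_eq_conjTranspose, dotProduct_comm]
  simp only [dotProduct, mulVec_diagonal, RCLike.ofReal_real_eq_id, Function.comp_apply, id]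
  exact Finset.sum_congr rfl fun i _ => by ring

theorem dotProduct_self_eq_sum (hA : A.IsHermitian) (x : n → ℝ) :
    x ⬝ᵥ x = ∑ i, (star (hA.eigenvectorUnitary : Matrix n n ℝ) *ᵥ x) i ^ 2 := by
  simpa [cfc_const_one ℝ A] using hA.dotProduct_cfc_mulVec (fun _ => 1) x

theorem abs_dotProduct_cfc_mulVec_le_iff (hA : A.IsHermitian) (f : ℝ → ℝ) (ε : ℝ) :
    (∀ x, |x ⬝ᵥ (cfc f A *ᵥ x)| ≤ ε * (x ⬝ᵥ x)) ↔ ∀ i, |f (hA.eigenvalues i)| ≤ ε := by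
  constructor
  · intro h i
    have hUe : star (hA.eigenvectorUnitary : Matrix n n ℝ) *ᵥ hA.eigenvectorUnitary.1.col i =
        Pi.single i 1 := by
      rw [← mulVec_single_one, mulVec_mulVec, Unitary.coe_star_mul_self, one_mulVec]
    have hi := h (hA.eigenvectorUnitary.1.col i)
    rw [hA.dotProduct_cfc_mulVec, hA.dotProduct_self_eq_sum, hUe] at hi
    simpa [Pi.single_apply] using hi
  · intro h x
    rw [hA.dotProduct_cfc_mulVec, hA.dotProduct_self_eq_sum, Finset.mul_sum]
    refine (Finset.abs_sum_le_sum_abs _ _).trans (Finset.sum_le_sum fun i _ => ?_)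
    rw [abs_mul, abs_sq]
    exact mul_le_mul_of_nonneg_right (h i) (sq_nonneg _)

end IsHermitian

namespace PosSemidef

theorem sqrt_eq_cfc (hA : A.PosSemidef) : hA.sqrt = cfc Real.sqrt A := by
  rw [hA.1.cfc_eq, IsHermitian.cfc, Unitary.conjStarAlgAut_apply]
  rfl

theorem nonneg_of_mem_spectrum (hA : A.PosSemidef) {t : ℝ} (ht : t ∈ spectrum ℝ A) : 0 ≤ t := by
  obtain ⟨i, rfl⟩ := hA.1.spectrum_real_eq_range_eigenvalues ▸ ht
  exact hA.eigenvalues_nonneg i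

theorem sqrt_mul_self (hA : A.PosSemidef) : hA.sqrt * hA.sqrt = A := by
  rw [hA.sqrt_eq_cfc, ← cfc_mul ..]
  conv_rhs => rw [← cfc_id' ℝ A hA.1.isSelfAdjoint]
  exact cfc_congr fun t ht => Real.mul_self_sqrt (hA.nonneg_of_mem_spectrum ht)

theorem transpose_sqrt (hA : A.PosSemidef) : hA.sqrtᵀ = hA.sqrt := by
  have hS : hA.sqrt.IsHermitian := hA.sqrt_eq_cfc ▸ cfc_predicate (R := ℝ) _ _
  simpa [IsHermitian, conjTranspose_eq_transpose_of_trivial] using hS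

theorem abs_dotProduct_sqrt_sub_sq_mulVec_le (hA : A.PosSemidef) {c ε : ℝ} (hc : 0 ≤ c)
    (h : ∀ x, |x ⬝ᵥ ((A - c • 1) *ᵥ x)| ≤ ε * (x ⬝ᵥ x)) :
    ∀ x, |x ⬝ᵥ ((hA.sqrt - √c • 1) ^ 2 *ᵥ x)| ≤ ε * (x ⬝ᵥ x) := by
  have hA' : IsSelfAdjoint A := hA.1.isSelfAdjoint
  have hsub : A - c • 1 = cfc (fun t => t - c) A := by
    rw [cfc_sub .., cfc_id' ℝ A, cfc_const c A, Algebra.algebraMap_eq_smul_one]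
  have hsqrt_sub : (hA.sqrt - √c • 1) ^ 2 = cfc (fun t => (√t - √c) ^ 2) A := by
    rw [cfc_pow .., cfc_sub .., cfc_const (√c) A, hA.sqrt_eq_cfc, Algebra.algebraMap_eq_smul_one]
  rw [hsub, hA.1.abs_dotProduct_cfc_mulVec_le_iff] at h
  rw [hsqrt_sub, hA.1.abs_dotProduct_cfc_mulVec_le_iff]
  intro i
  calc |(√(hA.1.eigenvalues i) - √c) ^ 2| = (√(hA.1.eigenvalues i) - √c) ^ 2 := abs_sq _
    _ ≤ |hA.1.eigenvalues i - c| := Real.sqrt_sub_sqrt_sq_le_abs_sub (hA.eigenvalues_nonneg i) hc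
    _ ≤ ε := h i

end PosSemidef

theorem PosDef.isUnit_det_sqrt (hA : A.PosDef) : IsUnit hA.posSemidef.sqrt.det :=
  (isUnit_iff_isUnit_det _).mp
    (isUnit_of_mul_isUnit_left (hA.posSemidef.sqrt_mul_self ▸ hA.isUnit))

end Matrix

section GaussianVector

variable {ι κ Ω : Type*} [Fintype ι] [MeasurableSpace Ω] {P : Measure Ω}

theorem memLp_of_map_eq_gaussianReal {X : Ω → ℝ} (hX : AEMeasurable X P) {μ : ℝ} {σ : ℝ≥0}
    (h : P.map X = gaussianReal μ σ) {p : ℝ≥0∞} (hp : p ≠ ∞) : MemLp X p P :=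
  (memLp_map_measure_iff aestronglyMeasurable_id hX).mp (h ▸ memLp_id_gaussianReal' p hp)

def IsCenteredGaussianWithCov (P : Measure Ω) (v : Ω → ι → ℝ) (Sig : Matrix ι ι ℝ) : Prop :=
  ∀ l : ι → ℝ, P.map (fun ω => l ⬝ᵥ v ω) = gaussianReal 0 (l ⬝ᵥ (Sig *ᵥ l)).toNNReal

variable {v : Ω → ι → ℝ} {Sig : Matrix ι ι ℝ}

namespace IsCenteredGaussianWithCov

theorem mulVec [Fintype κ] (h : IsCenteredGaussianWithCov P v Sig) (A : Matrix κ ι ℝ) :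
    IsCenteredGaussianWithCov P (fun ω => A *ᵥ v ω) (A * Sig * Aᵀ) := by
  intro l
  have hdot : ∀ w, l ⬝ᵥ (A *ᵥ w) = (Aᵀ *ᵥ l) ⬝ᵥ w := fun w => by
    rw [dotProduct_mulVec, mulVec_transpose]
  simp only [hdot, h (Aᵀ *ᵥ l), ← mulVec_mulVec]

theorem memLp_apply (h : IsCenteredGaussianWithCov P v Sig)
    (hv : ∀ a, AEMeasurable (fun ω => v ω a) P) (a : ι) {p : ℝ≥0∞} (hp : p ≠ ∞) :
    MemLp (fun ω => v ω a) p P := by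
  classical
  exact memLp_of_map_eq_gaussianReal (hv a) (by simpa using h (Pi.single a 1)) hp

theorem integrable_apply_mul_apply (h : IsCenteredGaussianWithCov P v Sig)
    (hv : ∀ a, AEMeasurable (fun ω => v ω a) P) (a b : ι) :
    Integrable (fun ω => v ω a * v ω b) P :=
  (h.memLp_apply hv a (p := 2) (by simp)).integrable_mul (h.memLp_apply hv b (p := 2) (by simp))

end IsCenteredGaussianWithCov

theorem integral_mulVec_apply_mul_mulVec_apply
    (hint : ∀ a b, Integrable (fun ω => v ω a * v ω b) P)
    (hcov : ∀ a b, ∫ ω, v ω a * v ω b ∂P = Sig a b) (A B : Matrix κ ι ℝ) (a b : κ) :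
    ∫ ω, (A *ᵥ v ω) a * (B *ᵥ v ω) b ∂P = (A * Sig * Bᵀ) a b := by
  have hexpand : ∀ ω, (A *ᵥ v ω) a * (B *ᵥ v ω) b =
      ∑ i, ∑ k, A a i * B b k * (v ω i * v ω k) := fun ω => by
    simp only [mulVec, dotProduct, Finset.sum_mul_sum]
    exact Finset.sum_congr rfl fun i _ => Finset.sum_congr rfl fun k _ => by ring
  simp_rw [hexpand]
  rw [integral_finsetSum _ fun i _ => integrable_finsetSum _ fun k _ => (hint i k).const_mul _]
  simp_rw [integral_finsetSum _ fun k _ => (hint _ k).const_mul _, integral_const_mul, hcov,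
    mul_apply, transpose_apply, Finset.sum_mul]
  exact Finset.sum_comm.trans
    (Finset.sum_congr rfl fun k _ => Finset.sum_congr rfl fun i _ => by ring)

end GaussianVector

theorem gaussian_coupling_general {d : ℕ} {Ω : Type*} [MeasurableSpace Ω] (P : Measure Ω)
    (v : Ω → Fin d → ℝ)
    (Sig : Matrix (Fin d) (Fin d) ℝ) (hpd : Sig.PosDef)
    (j ε : ℝ) (hj : 0 < j)
    (hmeas : ∀ a, Measurable fun ω => v ω a)
    (hGauss : ∀ l : Fin d → ℝ,
      P.map (fun ω => ∑ i, l i * v ω i) = gaussianReal 0 (Real.toNNReal (l ⬝ᵥ (Sig *ᵥ l))))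
    (hcov : ∀ a b, ∫ ω, v ω a * v ω b ∂P = Sig a b)
    (hnorm : ∀ x : Fin d → ℝ,
      |x ⬝ᵥ ((Sig - j • (1 : Matrix (Fin d) (Fin d) ℝ)) *ᵥ x)| ≤ ε * (x ⬝ᵥ x)) :
    let N : Ω → Fin d → ℝ :=
      fun ω => Real.sqrt j • ((hpd.posSemidef.sqrt)⁻¹ *ᵥ v ω)
    (∀ l : Fin d → ℝ,
        P.map (fun ω => ∑ i, l i * N ω i)
          = gaussianReal 0 (Real.toNNReal (j * (l ⬝ᵥ l))))
    ∧ (∀ a b, ∫ ω, N ω a * N ω b ∂P = (j • (1 : Matrix (Fin d) (Fin d) ℝ)) a b)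
    ∧ (∀ a b, ∫ ω, (v ω a - N ω a) * (v ω b - N ω b) ∂P
        = ((hpd.posSemidef.sqrt - Real.sqrt j • (1 : Matrix (Fin d) (Fin d) ℝ)) ^ 2) a b)
    ∧ (∀ x : Fin d → ℝ,
        |x ⬝ᵥ (((hpd.posSemidef.sqrt - Real.sqrt j • (1 : Matrix (Fin d) (Fin d) ℝ)) ^ 2) *ᵥ x)|
          ≤ ε * (x ⬝ᵥ x))
    ∧ (∀ a, ∫ ω, (v ω a - N ω a) ^ 2 ∂P ≤ ε) := by
  intro N
  set S := hpd.posSemidef.sqrt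
  set C := √j • S⁻¹
  have hSS : S * S = Sig := hpd.posSemidef.sqrt_mul_self
  have hv : IsCenteredGaussianWithCov P v Sig := hGauss
  have hint := hv.integrable_apply_mul_apply fun a => (hmeas a).aemeasurable
  have hN : ∀ ω, N ω = C *ᵥ v ω := fun ω => (smul_mulVec _ _ _).symm
  have hvN : ∀ ω a, v ω a - N ω a = ((1 - C) *ᵥ v ω) a := fun ω a => by
    rw [sub_mulVec, one_mulVec, ← hN]
    rfl
  have hcovN : C * Sig * Cᵀ = j • 1 := by
    rw [← hSS, smul_nonsing_inv_mul_mul_self_mul_transpose hpd.isUnit_det_sqrt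
      hpd.posSemidef.transpose_sqrt, Real.mul_self_sqrt hj.le]
  have hcovDiff : ∀ a b, ∫ ω, (v ω a - N ω a) * (v ω b - N ω b) ∂P =
      ((S - √j • (1 : Matrix (Fin d) (Fin d) ℝ)) ^ 2) a b := fun a b => by
    simp only [hvN]
    rw [integral_mulVec_apply_mul_mulVec_apply hint hcov, ← hSS,
      one_sub_smul_nonsing_inv_mul_mul_self_mul_transpose hpd.isUnit_det_sqrt
        hpd.posSemidef.transpose_sqrt]
  have hbound := hpd.posSemidef.abs_dotProduct_sqrt_sub_sq_mulVec_le hj.le hnorm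
  refine ⟨fun l => ?_, fun a b => ?_, hcovDiff, hbound, fun a => ?_⟩
  · have hl := hv.mulVec C l
    rw [hcovN, smul_mulVec, one_mulVec, dotProduct_smul, smul_eq_mul] at hl
    simp only [hN]
    exact hl
  · simp only [hN]
    rw [integral_mulVec_apply_mul_mulVec_apply hint hcov, hcovN]
  · simpa only [sq, hcovDiff] using apply_self_le_of_abs_dotProduct_mulVec_le hbound a

/-- Coupling lemma for Gaussian vectors: if `v` is a `d`-dimensional centered Gaussian
vector with positive definite covariance matrix `Σ` satisfying `‖Σ - j·I‖ ≤ ε` in operator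
norm (expressed via the quadratic form), then `N := √j·Σ^{-1/2}·v` is a centered Gaussian
vector with covariance `j·I`, the covariance matrix of `v - N` is `(Σ^{1/2} - √j·I)²`, it
has operator norm at most `ε`, and in particular every component of `v - N` has variance
at most `ε`. -/
theorem gaussian_coupling {d : ℕ} {Ω : Type*} [MeasurableSpace Ω] (P : Measure Ω)
    [IsProbabilityMeasure P] (v : Ω → Fin d → ℝ)
    (Sig : Matrix (Fin d) (Fin d) ℝ) (hpd : Sig.PosDef)
    (j ε : ℝ) (hj : 0 < j) (hε : 0 ≤ ε)
    (hmeas : ∀ a, Measurable fun ω => v ω a)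
    (hmean : ∀ a, ∫ ω, v ω a ∂P = 0)
    (hGauss : ∀ l : Fin d → ℝ,
      P.map (fun ω => ∑ i, l i * v ω i) = gaussianReal 0 (Real.toNNReal (l ⬝ᵥ (Sig *ᵥ l))))
    (hcov : ∀ a b, ∫ ω, v ω a * v ω b ∂P = Sig a b)
    (hnorm : ∀ x : Fin d → ℝ,
      |x ⬝ᵥ ((Sig - j • (1 : Matrix (Fin d) (Fin d) ℝ)) *ᵥ x)| ≤ ε * (x ⬝ᵥ x)) :
    let N : Ω → Fin d → ℝ :=
      fun ω => Real.sqrt j • ((hpd.posSemidef.sqrt)⁻¹ *ᵥ v ω)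
    (∀ l : Fin d → ℝ,
        P.map (fun ω => ∑ i, l i * N ω i)
          = gaussianReal 0 (Real.toNNReal (j * (l ⬝ᵥ l))))
    ∧ (∀ a b, ∫ ω, N ω a * N ω b ∂P = (j • (1 : Matrix (Fin d) (Fin d) ℝ)) a b)
    ∧ (∀ a b, ∫ ω, (v ω a - N ω a) * (v ω b - N ω b) ∂P
        = ((hpd.posSemidef.sqrt - Real.sqrt j • (1 : Matrix (Fin d) (Fin d) ℝ)) ^ 2) a b)
    ∧ (∀ x : Fin d → ℝ,
        |x ⬝ᵥ (((hpd.posSemidef.sqrt - Real.sqrt j • (1 : Matrix (Fin d) (Fin d) ℝ)) ^ 2) *ᵥ x)|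
          ≤ ε * (x ⬝ᵥ x))
    ∧ (∀ a, ∫ ω, (v ω a - N ω a) ^ 2 ∂P ≤ ε) :=
  gaussian_coupling_general P v Sig hpd j ε hj hmeas hGauss hcov hnorm
end

section
/- Fix n ≥ 1, k ≥ 1 with k < n. For strings X and Y of lengths n−k and n, the constrained optimal alignment score with exactly k gaps in X (gap penalty 0) satisfies L_n^k(S) = max over increasing sequences 0 = c₀ < c₁ < … < c_k < n of Σ_{i=1}^{k+1} (Rⁱ(cᵢ − 1) − Rⁱ(c_{i−1})) with c_{k+1} − 1 := n, where Rⁱ(m) = Σ_{l=1}^{m} S(X_{l−i+1}, Y_l). Moreover, replacing each cᵢ − 1 by cᵢ changes the value by at most C·k, where C = max_{u,v} |S(u,v)|; i.e. |L̃_n^k(S) − L_n^k(S)| ≤ C·k. -/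
open Finset

section

variable {A : Type*}

/-- Partial sums `Rⁱ(m) = Σ_{l=1}^m S(X_{l-i+1}, Y_l)` of the shifted scoring walks. -/
noncomputable def Rw (S : A → A → ℝ) (X : ℤ → A) (Y : ℕ → A) (i m : ℕ) : ℝ :=
  ∑ l ∈ Finset.Icc 1 m, S (X ((l : ℤ) - (i : ℤ) + 1)) (Y l)

/-- Score of the alignment of `X` (length `n - k`, extended to a doubly infinite sequence)
with `Y₁…Yₙ` in which exactly the letters `Y_l`, `l ∈ g`, are aligned with gaps (gap
penalty `0`): each remaining `Y_l` is aligned with `X_{l - #(gaps before l)}`. -/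
noncomputable def gapScore (S : A → A → ℝ) (X : ℤ → A) (Y : ℕ → A) (n : ℕ)
    (g : Finset ℕ) : ℝ :=
  ∑ l ∈ Finset.Icc 1 n \ g, S (X ((l : ℤ) - ((g.filter (· < l)).card : ℤ))) (Y l)

/-- The sum `Σ_{i=1}^{k+1} (Rⁱ(cᵢ - 1) - Rⁱ(c_{i-1}))` for a chain
`0 = c₀ < c₁ < … < c_k < n` (encoded with `c_{k+1} = n + 1`, so `c_{k+1} - 1 = n`). -/
noncomputable def chainSum (S : A → A → ℝ) (X : ℤ → A) (Y : ℕ → A) (k : ℕ)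
    (c : Fin (k + 2) → ℕ) : ℝ :=
  ∑ i : Fin (k + 1), (Rw S X Y ((i : ℕ) + 1) (c i.succ - 1) - Rw S X Y ((i : ℕ) + 1) (c i.castSucc))

/-- The modified sum in which each upper boundary `cᵢ - 1` is replaced by `cᵢ`
(the final boundary stays `n`). -/
noncomputable def chainSumTilde (S : A → A → ℝ) (X : ℤ → A) (Y : ℕ → A) (n k : ℕ)
    (c : Fin (k + 2) → ℕ) : ℝ :=
  ∑ i : Fin (k + 1),
    (Rw S X Y ((i : ℕ) + 1) (if i.succ = Fin.last (k + 1) then n else c i.succ)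
      - Rw S X Y ((i : ℕ) + 1) (c i.castSucc))

/-- A chain `0 = c₀ < c₁ < … < c_k < n` with the convention `c_{k+1} = n + 1`. -/
def AdmissibleChain (n k : ℕ) (c : Fin (k + 2) → ℕ) : Prop :=
  StrictMono c ∧ c 0 = 0 ∧ c (Fin.last (k + 1)) = n + 1 ∧
    ∀ i : Fin (k + 2), i ≠ Fin.last (k + 1) → c i < n

/-!
Deleting the gap positions `c₁ < … < c_k` splits `1, …, n` into the `k + 1` blocks
`(c_{i-1}, cᵢ)`, and on the `i`-th block every letter of `Y` sees exactly `i - 1` gaps before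
it, so it is matched with the letter of `X` shifted by `i - 1`: the score of the block is an
increment of `Rⁱ`. Hence gap sets and chains correspond bijectively with equal scores.
Replacing `cᵢ - 1` by `cᵢ` adds the single letter score at `cᵢ` for each of the `k` inner
boundaries, and a uniform perturbation of a finite family moves its maximum by at most as much.
-/

lemma Fin.exists_apply_castSucc_lt_lt_apply_succ {α : Type*} [LinearOrder α] {m : ℕ}
    {c : Fin (m + 1) → α} {l : α} (h0 : c 0 < l) (hl : l < c (Fin.last m))
    (hlc : ∀ j, c j ≠ l) : ∃ i : Fin m, c i.castSucc < l ∧ l < c i.succ := by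
  suffices H : ∀ j : Fin (m + 1), l < c j → ∃ i : Fin m, c i.castSucc < l ∧ l < c i.succ from
    H _ hl
  intro j
  induction j using Fin.induction with
  | zero => exact fun h => absurd h0 (lt_asymm h)
  | succ i ih =>
    intro h
    rcases lt_trichotomy (c i.castSucc) l with h' | h' | h'
    · exact ⟨i, h', h⟩
    · exact absurd h' (hlc _)
    · exact ih h'

lemma StrictMono.sum_Ioo_sdiff_image_eq_sum_Ioo {M : Type*} [AddCommMonoid M] {m : ℕ}
    {c : Fin (m + 1) → ℕ} (hc : StrictMono c) (f : ℕ → M) :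
    ∑ l ∈ Ioo (c 0) (c (Fin.last m)) \ univ.image c, f l
      = ∑ i : Fin m, ∑ l ∈ Ioo (c i.castSucc) (c i.succ), f l := by
  have hdisj :
      Pairwise (Function.onFun Disjoint fun i : Fin m => Ioo (c i.castSucc) (c i.succ)) := by
    refine (pairwise_disjoint_on _).2 fun i j hij => disjoint_left.2 fun l hi hj => ?_
    have : c i.succ ≤ c j.castSucc := hc.monotone (Fin.succ_le_castSucc_iff.2 hij)
    simp only [mem_Ioo] at hi hj
    omega
  rw [← sum_biUnion (hdisj.set_pairwise _)]
  congr 1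
  ext l
  simp only [mem_sdiff, mem_Ioo, mem_image, mem_univ, true_and, mem_biUnion, not_exists]
  constructor
  · rintro ⟨⟨h0, hl⟩, hlc⟩
    exact Fin.exists_apply_castSucc_lt_lt_apply_succ h0 hl hlc
  · rintro ⟨i, hi, hi'⟩
    refine ⟨⟨(hc.monotone (Fin.zero_le _)).trans_lt hi,
      hi'.trans_le (hc.monotone (Fin.le_last _))⟩, ?_⟩
    rintro j rfl
    have h1 := hc.lt_iff_lt.1 hi
    have h2 := hc.lt_iff_lt.1 hi'
    simp only [Fin.lt_def, Fin.val_castSucc, Fin.val_succ] at h1 h2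
    omega

section Rw

variable (S : A → A → ℝ) (X : ℤ → A) (Y : ℕ → A) (i : ℕ)

lemma Rw_sub_Rw {a b : ℕ} (hab : a ≤ b) :
    Rw S X Y i b - Rw S X Y i a = ∑ l ∈ Ioc a b, S (X ((l : ℤ) - i + 1)) (Y l) := by
  have h (m : ℕ) : Rw S X Y i m = ∑ l ∈ Ioc 0 m, S (X ((l : ℤ) - i + 1)) (Y l) := by
    rw [Rw, ← Icc_add_one_left_eq_Ioc, zero_add]
  rw [h, h, ← sum_Ioc_consecutive _ (Nat.zero_le a) hab, add_sub_cancel_left]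

lemma Rw_sub_one_sub_Rw {a b : ℕ} (hab : a < b) :
    Rw S X Y i (b - 1) - Rw S X Y i a = ∑ l ∈ Ioo a b, S (X ((l : ℤ) - i + 1)) (Y l) := by
  rw [Rw_sub_Rw _ _ _ _ (by omega), Ioc_sub_one_right_eq_Ioo]

lemma Rw_sub_Rw_sub_one {m : ℕ} (hm : 0 < m) :
    Rw S X Y i m - Rw S X Y i (m - 1) = S (X ((m : ℤ) - i + 1)) (Y m) := by
  obtain ⟨m, rfl⟩ := Nat.exists_eq_add_one_of_ne_zero hm.ne'
  rw [Rw_sub_Rw _ _ _ _ (by omega), Nat.add_sub_cancel, Nat.Ioc_succ_singleton, sum_singleton]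

end Rw

def chainInterior (k : ℕ) (c : Fin (k + 2) → ℕ) : Finset ℕ :=
  univ.image fun m : Fin k => c m.castSucc.succ

namespace AdmissibleChain

variable {n k : ℕ} {c : Fin (k + 2) → ℕ}

lemma injective_interior (hc : AdmissibleChain n k c) :
    Function.Injective fun m : Fin k => c m.castSucc.succ :=
  hc.1.injective.comp ((Fin.succ_injective _).comp (Fin.castSucc_injective _))

lemma card_chainInterior (hc : AdmissibleChain n k c) : #(chainInterior k c) = k := by
  rw [chainInterior, card_image_of_injective _ hc.injective_interior, card_univ, Fintype.card_fin]

lemma chainInterior_subset (hc : AdmissibleChain n k c) : chainInterior k c ⊆ Ico 1 n := by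
  simp only [chainInterior, image_subset_iff, mem_univ, mem_Ico, forall_const]
  intro m
  have h0 : c 0 < c m.castSucc.succ := hc.1 (Fin.succ_pos _)
  exact ⟨by omega, hc.2.2.2 _ (Fin.succ_ne_last_of_lt (Fin.castSucc_lt_last m))⟩

lemma sdiff_chainInterior (hc : AdmissibleChain n k c) :
    Icc 1 n \ chainInterior k c = Ioo (c 0) (c (Fin.last _)) \ univ.image c := by
  obtain ⟨-, h0, hlast, -⟩ := hc
  ext l
  simp only [chainInterior, mem_sdiff, mem_Icc, mem_Ioo, mem_image, mem_univ, true_and, h0, hlast]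
  constructor
  · rintro ⟨hl, hlg⟩
    refine ⟨by omega, ?_⟩
    rintro ⟨j, rfl⟩
    induction j using Fin.cases with
    | zero => omega
    | succ i =>
      induction i using Fin.lastCases with
      | last => rw [Fin.succ_last, hlast] at hl; omega
      | cast m => exact hlg ⟨m, rfl⟩
  · rintro ⟨hl, hlc⟩
    exact ⟨by omega, fun ⟨m, hm⟩ => hlc ⟨_, hm⟩⟩

lemma card_filter_chainInterior_lt (hc : AdmissibleChain n k c) {i : Fin (k + 1)} {l : ℕ}
    (hi : c i.castSucc < l) (hi' : l < c i.succ) : #{x ∈ chainInterior k c | x < l} = i := by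
  rw [chainInterior, filter_image, card_image_of_injective _ hc.injective_interior]
  have hiff (m : Fin k) : c m.castSucc.succ < l ↔ (m : ℕ) < i := by
    constructor
    · intro h
      simpa [Fin.lt_def] using hc.1.lt_iff_lt.1 (h.trans hi')
    · intro h
      refine lt_of_le_of_lt (hc.1.monotone ?_) hi
      simp only [Fin.le_def, Fin.val_succ, Fin.val_castSucc]
      omega
  rw [filter_congr fun m _ => hiff m, Fin.card_filter_val_lt]
  omega

variable (S : A → A → ℝ) (X : ℤ → A) (Y : ℕ → A)

lemma gapScore_chainInterior (hc : AdmissibleChain n k c) :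
    gapScore S X Y n (chainInterior k c) = chainSum S X Y k c := by
  rw [gapScore, hc.sdiff_chainInterior, hc.1.sum_Ioo_sdiff_image_eq_sum_Ioo, chainSum]
  refine sum_congr rfl fun i _ => ?_
  rw [Rw_sub_one_sub_Rw _ _ _ _ (hc.1 Fin.castSucc_lt_succ)]
  refine sum_congr rfl fun l hl => ?_
  rw [mem_Ioo] at hl
  rw [hc.card_filter_chainInterior_lt hl.1 hl.2]
  push_cast
  ring_nf

lemma abs_chainSumTilde_sub_chainSum_le (hc : AdmissibleChain n k c) {C : ℝ}
    (hC : ∀ u v, |S u v| ≤ C) : |chainSumTilde S X Y n k c - chainSum S X Y k c| ≤ C * k := by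
  rw [chainSumTilde, chainSum, ← sum_sub_distrib, Fin.sum_univ_castSucc]
  -- the last block contributes nothing: both sums end it at `c_{k+1} - 1 = n`
  simp only [Fin.succ_last, ite_true, hc.2.2.1, Nat.add_sub_cancel, sub_self, add_zero]
  refine (abs_sum_le_sum_abs _ _).trans ?_
  calc _ ≤ ∑ _i : Fin k, C := sum_le_sum fun i _ => ?_
    _ = C * k := by rw [sum_const, card_univ, Fintype.card_fin, nsmul_eq_mul, mul_comm]
  rw [if_neg (Fin.succ_ne_last_of_lt (Fin.castSucc_lt_last i)), sub_sub_sub_cancel_right,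
    Rw_sub_Rw_sub_one _ _ _ _ ((Nat.zero_le _).trans_lt (hc.1 (Fin.succ_pos _)))]
  exact hC _ _

end AdmissibleChain

lemma exists_admissibleChain_chainInterior_eq {n k : ℕ} (hn : 0 < n) {g : Finset ℕ}
    (hg : #g = k) (hgn : g ⊆ Ico 1 n) :
    ∃ c : Fin (k + 2) → ℕ, AdmissibleChain n k c ∧ chainInterior k c = g := by
  have hg0 : 0 ∉ g := fun h => by simpa using hgn h
  have hgn1 : n + 1 ∉ g := fun h => by simpa using hgn h
  set s := insert 0 (insert (n + 1) g)
  have hs : #s = k + 2 := by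
    rw [card_insert_of_notMem (by simp [hg0]), card_insert_of_notMem hgn1, hg]
  have hmem (x : ℕ) (hx : x ∈ s) : x = 0 ∨ x = n + 1 ∨ x ∈ g := by simpa [s] using hx
  have hlt (x : ℕ) (hx : x ∈ s) (hne : x ≠ n + 1) : x < n := by
    rcases hmem x hx with rfl | rfl | hx
    · exact hn
    · exact absurd rfl hne
    · exact (mem_Ico.1 (hgn hx)).2
  set c := s.orderEmbOfFin hs
  have hc0 : c 0 = 0 := by
    calc c 0 = s.min' _ := orderEmbOfFin_zero hs (by omega)
      _ = 0 := Nat.le_zero.1 (min'_le _ _ (mem_insert_self _ _))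
  have hclast : c (Fin.last _) = n + 1 := by
    calc c (Fin.last _) = s.max' _ := orderEmbOfFin_last hs (by omega)
      _ = n + 1 := by
        refine le_antisymm (max'_le _ _ _ fun x hx => ?_) (le_max' _ _ (by simp [s]))
        by_cases hx' : x = n + 1
        · exact hx'.le
        · exact (hlt x hx hx').le.trans (Nat.le_succ n)
  have hc : AdmissibleChain n k c := ⟨c.strictMono, hc0, hclast, fun i hi =>
    hlt _ (orderEmbOfFin_mem _ _ _) fun h => hi (c.injective (h.trans hclast.symm))⟩
  refine ⟨c, hc, eq_of_subset_of_card_le ?_ (by rw [hc.card_chainInterior, hg])⟩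
  simp only [chainInterior, image_subset_iff, mem_univ, forall_const]
  intro m
  have h0 : c 0 < c m.castSucc.succ := c.strictMono (Fin.succ_pos _)
  have h1 := hc.2.2.2 _ (Fin.succ_ne_last_of_lt (Fin.castSucc_lt_last m))
  rcases hmem (c m.castSucc.succ) (orderEmbOfFin_mem s hs _) with h | h | h
  · omega
  · omega
  · exact h

lemma setOf_admissibleChain_finite (n k : ℕ) : {c | AdmissibleChain n k c}.Finite :=
  (Set.finite_Icc (0 : Fin (k + 2) → ℕ) fun _ => n + 1).subset fun _ hc =>
    ⟨fun _ => Nat.zero_le _, fun i => hc.2.2.1 ▸ hc.1.monotone (Fin.le_last i)⟩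

lemma abs_sSup_image_sub_sSup_image_le {α : Type*} {P : Set α} (hP : P.Finite) {f g : α → ℝ}
    {B : ℝ} (hB : 0 ≤ B) (h : ∀ p ∈ P, |f p - g p| ≤ B) :
    |sSup (f '' P) - sSup (g '' P)| ≤ B := by
  rcases P.eq_empty_or_nonempty with rfl | hne
  · simpa using hB
  have key (f g : α → ℝ) (h : ∀ p ∈ P, f p - g p ≤ B) : sSup (f '' P) - sSup (g '' P) ≤ B := by
    refine sub_le_iff_le_add.2 (csSup_le (hne.image f) (Set.forall_mem_image.2 fun p hp => ?_))
    have := le_csSup (hP.image g).bddAbove (Set.mem_image_of_mem g hp)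
    linarith [h p hp]
  exact abs_sub_le_iff.2 ⟨key f g fun p hp => (abs_sub_le_iff.1 (h p hp)).1,
    key g f fun p hp => (abs_sub_le_iff.1 (h p hp)).2⟩

theorem constrained_score_eq_chain_max_general (S : A → A → ℝ) (X : ℤ → A) (Y : ℕ → A)
    (n k : ℕ) (hkn : k < n) (C : ℝ) (hC : ∀ u v : A, |S u v| ≤ C) :
    (sSup {s : ℝ | ∃ g : Finset ℕ, g.card = k ∧ g ⊆ Finset.Ico 1 n ∧
          s = gapScore S X Y n g}
        = sSup {s : ℝ | ∃ c : Fin (k + 2) → ℕ, AdmissibleChain n k c ∧ s = chainSum S X Y k c})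
    ∧ (∀ c : Fin (k + 2) → ℕ, AdmissibleChain n k c →
        |chainSumTilde S X Y n k c - chainSum S X Y k c| ≤ C * k)
    ∧ |sSup {s : ℝ | ∃ c : Fin (k + 2) → ℕ, AdmissibleChain n k c ∧ s = chainSumTilde S X Y n k c}
        - sSup {s : ℝ | ∃ c : Fin (k + 2) → ℕ, AdmissibleChain n k c ∧ s = chainSum S X Y k c}|
      ≤ C * k := by
  refine ⟨?_, fun c hc => hc.abs_chainSumTilde_sub_chainSum_le S X Y hC, ?_⟩
  · congr 1
    ext s
    constructor
    · rintro ⟨g, hg, hgn, rfl⟩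
      obtain ⟨c, hc, rfl⟩ := exists_admissibleChain_chainInterior_eq (by omega) hg hgn
      exact ⟨c, hc, hc.gapScore_chainInterior S X Y⟩
    · rintro ⟨c, hc, rfl⟩
      exact ⟨_, hc.card_chainInterior, hc.chainInterior_subset,
        (hc.gapScore_chainInterior S X Y).symm⟩
  · have himage (f : (Fin (k + 2) → ℕ) → ℝ) :
        {s | ∃ c, AdmissibleChain n k c ∧ s = f c} = f '' {c | AdmissibleChain n k c} := by
      ext
      simp [eq_comm]
    have hCk : 0 ≤ C * k := mul_nonneg ((abs_nonneg _).trans (hC (X 0) (X 0))) k.cast_nonneg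
    rw [himage, himage]
    exact abs_sSup_image_sub_sSup_image_le (setOf_admissibleChain_finite n k) hCk
      fun c hc => hc.abs_chainSumTilde_sub_chainSum_le S X Y hC

/-- The constrained optimal alignment score with exactly `k` gaps, all inserted into `X`,
equals the maximum over chains `0 = c₀ < c₁ < … < c_k < n` of
`Σ_{i=1}^{k+1} (Rⁱ(cᵢ - 1) - Rⁱ(c_{i-1}))` (with `c_{k+1} - 1 = n`); moreover replacing
each `cᵢ - 1` by `cᵢ` changes each value, and hence the optimum, by at most `C·k`, where
`C` bounds `|S|`. -/
theorem constrained_score_eq_chain_max (S : A → A → ℝ) (X : ℤ → A) (Y : ℕ → A)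
    (n k : ℕ) (hk1 : 1 ≤ k) (hkn : k < n) (C : ℝ) (hC : ∀ u v : A, |S u v| ≤ C) :
    (sSup {s : ℝ | ∃ g : Finset ℕ, g.card = k ∧ g ⊆ Finset.Ico 1 n ∧
          s = gapScore S X Y n g}
        = sSup {s : ℝ | ∃ c : Fin (k + 2) → ℕ, AdmissibleChain n k c ∧ s = chainSum S X Y k c})
    ∧ (∀ c : Fin (k + 2) → ℕ, AdmissibleChain n k c →
        |chainSumTilde S X Y n k c - chainSum S X Y k c| ≤ C * k)
    ∧ |sSup {s : ℝ | ∃ c : Fin (k + 2) → ℕ, AdmissibleChain n k c ∧ s = chainSumTilde S X Y n k c}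
        - sSup {s : ℝ | ∃ c : Fin (k + 2) → ℕ, AdmissibleChain n k c ∧ s = chainSum S X Y k c}|
      ≤ C * k :=
  constrained_score_eq_chain_max_general S X Y n k hkn C hC

end
end
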